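/- Let y be the classical pattern 213 or the classical pattern 231. For every n ≥ 0, the number of permutations of {1,…,n} that avoid both the bivincular pattern ω and the classical pattern y equals the n-th Motzkin number m_n = Σ_{k≥0} C(n,2k) · c_k, where c_k is the k-th Catalan number. -/

import Mathlib

/-!
Split the avoiders `p` of length `n + 1` according to their first entry `w`. If `w = 1`, deleting
it leaves an arbitrary avoider of length `n`. If `w ≥ 2`, avoiding `231` (resp. `213`) with the
first entry as the `2` forces all entries below `w` to come before (resp. after) all entries above
`w`, and avoiding `ω` forces the first entry below `w` to be `1`. Hence
`p = w 1 (σ + 1) (τ + w)` (resp. `p = w (τ + w) 1 (σ + 1)`) with `σ`, `τ` arbitrary avoiders of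
lengths `w - 2` and `n + 1 - w`, and conversely every such word is an avoider. So the counts satisfy
the Motzkin recurrence `m (n + 2) = m (n + 1) + ∑_{i + j = n} m i * m j`, which the
binomial–Catalan sums also satisfy, by Pascal's rule, the Catalan convolution and the identity
`∑_{i + j = n} C(i, r) C(j, s) = C(n + 1, r + s + 1)`.
-/

/-- A Cayley permutation of length `n`: a word whose set of values is `{1, …, k}`
for some `k ≤ n`. -/
def IsCayley {n : ℕ} (x : Fin n → ℕ) : Prop :=
  ∃ k, k ≤ n ∧ Set.range x = Set.Icc 1 k

/-- Ascent tops of `x`: indices `i` with `i = 0` or `x (i-1) < x i`. -/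
def AscTops {n : ℕ} (x : Fin n → ℕ) : Set (Fin n) :=
  {i | ∀ j : Fin n, (j : ℕ) + 1 = (i : ℕ) → x j < x i}

/-- Leftmost copies of `x`: indices `i` such that the value `x i` does not occur earlier. -/
def Nub {n : ℕ} (x : Fin n → ℕ) : Set (Fin n) :=
  {i | ∀ j : Fin n, j < i → x j ≠ x i}

/-- A modified ascent sequence: a Cayley permutation whose ascent tops
are exactly its leftmost copies. -/
def IsModasc {n : ℕ} (x : Fin n → ℕ) : Prop :=
  IsCayley x ∧ AscTops x = Nub x

/-- `x` has no flat steps (no two consecutive equal entries). -/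
def NoFlat {n : ℕ} (x : Fin n → ℕ) : Prop :=
  ∀ i j : Fin n, (j : ℕ) = (i : ℕ) + 1 → x i ≠ x j

/-- A primitive modified ascent sequence. -/
def IsPrim {n : ℕ} (x : Fin n → ℕ) : Prop :=
  IsModasc x ∧ NoFlat x

/-- The word `x` contains the pattern `y`. -/
def Contains {n k : ℕ} (x : Fin n → ℕ) (y : Fin k → ℕ) : Prop :=
  ∃ f : Fin k → Fin n, StrictMono f ∧ ∀ s t, y s < y t ↔ x (f s) < x (f t)

/-- The word `x` avoids the pattern `y`. -/
def Avoids {n k : ℕ} (x : Fin n → ℕ) (y : Fin k → ℕ) : Prop :=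
  ¬ Contains x y

/-- Standardization: `(Std x) i = #{j : x j < x i} + #{j ≤ i : x j = x i}`. -/
def Std {n : ℕ} (x : Fin n → ℕ) : Fin n → ℕ :=
  fun i => (Finset.univ.filter fun j => x j < x i).card +
    (Finset.univ.filter fun j => j ≤ i ∧ x j = x i).card

/-- `p` is a permutation of `{1, …, n}` (written as a word). -/
def IsPerm {n : ℕ} (p : Fin n → ℕ) : Prop :=
  Function.Injective p ∧ Set.range p = Set.Icc 1 n

/-- `p` contains the bivincular pattern `ω = (321, {1}, {1})`:
there are `i` and `j` with `i + 1 < j`, `p i > p (i+1)` and `p (i+1) = p j + 1`. -/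
def ContainsOmega {n : ℕ} (p : Fin n → ℕ) : Prop :=
  ∃ (i j : Fin n) (hi : (i : ℕ) + 1 < n),
    (i : ℕ) + 1 < (j : ℕ) ∧ p ⟨(i : ℕ) + 1, hi⟩ < p i ∧ p ⟨(i : ℕ) + 1, hi⟩ = p j + 1

/-- Membership in `Ω_n`: a permutation of `{1, …, n}` whose first entry is `1`
and which avoids the bivincular pattern `ω`. -/
def InOmega {n : ℕ} (p : Fin n → ℕ) : Prop :=
  IsPerm p ∧ (∀ h : 0 < n, p ⟨0, h⟩ = 1) ∧ ¬ ContainsOmega p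

open Finset

def motzkin (n : ℕ) : ℕ := ∑ k ∈ range (n + 1), n.choose (2 * k) * catalan k

theorem motzkin_eq_sum_range {n K : ℕ} (h : n < K) :
    motzkin n = ∑ k ∈ range K, n.choose (2 * k) * catalan k := by
  refine sum_subset (range_subset_range.2 h) fun k _ hk => ?_
  rw [mem_range, not_lt] at hk
  rw [Nat.choose_eq_zero_of_lt (by omega), zero_mul]

theorem sum_antidiagonal_choose_mul_choose (n r s : ℕ) :
    ∑ ij ∈ antidiagonal n, ij.1.choose r * ij.2.choose s = (n + 1).choose (r + s + 1) := by
  induction n generalizing r s with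
  | zero => cases r <;> cases s <;> simp <;> exact (Nat.choose_eq_zero_of_lt (by omega)).symm
  | succ n ih =>
    cases r with
    | succ r =>
      rw [Nat.sum_antidiagonal_succ, Nat.choose_zero_succ, zero_mul, zero_add]
      simp only [Nat.choose_succ_succ' _ r, add_mul, sum_add_distrib, ih]
      rw [show r + 1 + s + 1 = r + s + 1 + 1 by omega, Nat.choose_succ_succ' (n + 1) (r + s + 1)]
    | zero =>
      cases s with
      | succ s =>
        rw [Nat.sum_antidiagonal_succ', Nat.choose_zero_succ, mul_zero, zero_add]
        simp only [Nat.choose_succ_succ' _ s, mul_add, sum_add_distrib, ih]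
        rw [zero_add, zero_add]
        rw [Nat.choose_succ_succ' (n + 1) (s + 1)]
      | zero => simp

theorem sum_antidiagonal_motzkin_mul_motzkin (n : ℕ) :
    ∑ ij ∈ antidiagonal n, motzkin ij.1 * motzkin ij.2 =
      ∑ a ∈ range (n + 2), ∑ b ∈ range (n + 2),
        (n + 1).choose (2 * a + 2 * b + 1) * (catalan a * catalan b) := by
  have hM : ∀ ij ∈ antidiagonal n, motzkin ij.1 * motzkin ij.2 = ∑ a ∈ range (n + 2),
      ∑ b ∈ range (n + 2), ij.1.choose (2 * a) * ij.2.choose (2 * b) * (catalan a * catalan b) := by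
    intro ij hij
    rw [Finset.HasAntidiagonal.mem_antidiagonal] at hij
    rw [motzkin_eq_sum_range (K := n + 2) (by omega), motzkin_eq_sum_range (K := n + 2) (by omega),
      sum_mul_sum]
    exact sum_congr rfl fun a _ => sum_congr rfl fun b _ => by ring
  rw [sum_congr rfl hM, sum_comm]
  refine sum_congr rfl fun a _ => ?_
  rw [sum_comm]
  refine sum_congr rfl fun b _ => ?_
  rw [← sum_mul, sum_antidiagonal_choose_mul_choose]

theorem sum_range_choose_odd_mul_catalan_succ (n : ℕ) :
    ∑ k ∈ range (n + 2), (n + 1).choose (2 * k + 1) * catalan (k + 1) =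
      ∑ a ∈ range (n + 2), ∑ b ∈ range (n + 2),
        (n + 1).choose (2 * a + 2 * b + 1) * (catalan a * catalan b) := by
  have hk : ∀ k ∈ range (n + 2), (n + 1).choose (2 * k + 1) * catalan (k + 1) =
      ∑ a ∈ range (k + 1),
        (n + 1).choose (2 * a + 2 * (k - a) + 1) * (catalan a * catalan (k - a)) := by
    intro k _
    rw [catalan_succ', Nat.sum_antidiagonal_eq_sum_range_succ (fun a b => catalan a * catalan b),
      mul_sum]
    exact sum_congr rfl fun a ha => by rw [show 2 * a + 2 * (k - a) = 2 * k by
      rw [mem_range] at ha; omega]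
  rw [sum_congr rfl hk]
  refine (sum_range_diag_flip (n + 2) fun a b =>
    (n + 1).choose (2 * a + 2 * b + 1) * (catalan a * catalan b)).trans ?_
  refine sum_congr rfl fun a _ => sum_subset (range_subset_range.2 (by omega)) fun b _ hb => ?_
  rw [mem_range, not_lt] at hb
  rw [Nat.choose_eq_zero_of_lt (by omega), zero_mul]

theorem motzkin_add_two (n : ℕ) :
    motzkin (n + 2) = motzkin (n + 1) + ∑ ij ∈ antidiagonal n, motzkin ij.1 * motzkin ij.2 := by
  rw [sum_antidiagonal_motzkin_mul_motzkin, ← sum_range_choose_odd_mul_catalan_succ,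
    motzkin, motzkin_eq_sum_range (K := n + 3) (by omega), sum_range_succ' _ (n + 2),
    sum_range_succ' _ (n + 2)]
  simp only [show ∀ k, 2 * (k + 1) = 2 * k + 1 + 1 from fun k => by ring, Nat.choose_succ_succ',
    add_mul, sum_add_distrib, mul_zero, Nat.choose_zero_right]
  ring

theorem eq_motzkin_of_recurrence {f : ℕ → ℕ} (h0 : f 0 = 1) (h1 : f 1 = 1)
    (h : ∀ n, f (n + 2) = f (n + 1) + ∑ ij ∈ antidiagonal n, f ij.1 * f ij.2) (n : ℕ) :
    f n = motzkin n := by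
  induction n using Nat.strong_induction_on with
  | _ n ih =>
    match n with
    | 0 => simp [h0, motzkin]
    | 1 => simp [h1, motzkin, sum_range_succ]
    | n + 2 =>
      rw [h, motzkin_add_two, ih (n + 1) (by omega)]
      congr 1
      refine sum_congr rfl fun ij hij => ?_
      rw [Finset.HasAntidiagonal.mem_antidiagonal] at hij
      rw [ih ij.1 (by omega), ih ij.2 (by omega)]

theorem filter_range_eq_range_card {N : ℕ} {P : ℕ → Prop} [DecidablePred P]
    (hP : ∀ s t, s ≤ t → t < N → P t → P s) :
    (range N).filter P = range #((range N).filter P) := by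
  induction N with
  | zero => simp
  | succ N ih =>
    by_cases hN : P N
    · rw [filter_true_of_mem fun s hs => hP s N (by simp at hs; omega) (by omega) hN, card_range]
    · rw [range_add_one, filter_insert, if_neg hN]
      exact ih fun s t hst ht => hP s t hst (by omega)

theorem card_subtype_eq_of_injective {α β : Type*} {P : α → Prop} {A : β → Prop} (g : β → α)
    (hg : Function.Injective g) (hA : ∀ b, A b → P (g b))
    (hP : ∀ a, P a → ∃ b, A b ∧ g b = a) :
    Nat.card {a // P a} = Nat.card {b // A b} :=
  (Nat.card_congr (Equiv.ofBijective (fun b : {b // A b} => (⟨g b.1, hA b.1 b.2⟩ : {a // P a}))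
    ⟨fun _ _ h => Subtype.ext (hg (congrArg Subtype.val h)), fun ⟨a, ha⟩ =>
      let ⟨b, hb, e⟩ := hP a ha; ⟨⟨b, hb⟩, Subtype.ext e⟩⟩)).symm

theorem card_subtype_eq_mul_of_injective2 {α β γ : Type*} {P : α → Prop} {A : β → Prop}
    {B : γ → Prop} (g : β → γ → α) (hg : Function.Injective2 g)
    (hAB : ∀ b c, A b → B c → P (g b c)) (hP : ∀ a, P a → ∃ b c, A b ∧ B c ∧ g b c = a) :
    Nat.card {a // P a} = Nat.card {b // A b} * Nat.card {c // B c} := by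
  rw [← Nat.card_prod, ← Nat.card_congr (Equiv.subtypeProdEquivProd (p := A) (q := B))]
  exact card_subtype_eq_of_injective (Function.uncurry g) hg.uncurry
    (fun bc h => hAB bc.1 bc.2 h.1 h.2) fun a ha =>
      let ⟨b, c, hb, hc, e⟩ := hP a ha; ⟨(b, c), ⟨hb, hc⟩, e⟩

theorem Nat.card_eq_sum_card_fiber {α : Type*} [Finite α] (g : α → ℕ) {K : ℕ}
    (hg : ∀ a, g a < K) : Nat.card α = ∑ v ∈ range K, Nat.card {a // g a = v} := by
  classical
  have := Fintype.ofFinite α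
  rw [Nat.card_eq_fintype_card, ← Finset.card_univ,
    card_eq_sum_card_fiberwise fun a _ => mem_range.2 (hg a)]
  exact sum_congr rfl fun v _ => by rw [Nat.card_eq_fintype_card, Fintype.card_subtype]

section Words

variable {n : ℕ}

def entry (p : Fin n → ℕ) (m : ℕ) : ℕ := if h : m < n then p ⟨m, h⟩ else 0

theorem entry_of_lt (p : Fin n → ℕ) {m : ℕ} (h : m < n) : entry p m = p ⟨m, h⟩ := dif_pos h

@[simp] theorem entry_val (p : Fin n → ℕ) (k : Fin n) : entry p k = p k := entry_of_lt p k.2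

theorem ext_of_entry {p q : Fin n → ℕ} (h : ∀ m < n, entry p m = entry q m) : p = q :=
  funext fun k => by simpa using h k k.2

def shift (c : ℕ) (q : Fin n → ℕ) : Fin n → ℕ := fun k => q k + c

theorem entry_shift (c : ℕ) (q : Fin n → ℕ) {m : ℕ} (h : m < n) :
    entry (shift c q) m = entry q m + c := by
  rw [entry_of_lt _ h, entry_of_lt _ h]; rfl

@[simp] theorem entry_cons_zero (a : ℕ) (x : Fin n → ℕ) :
    entry (Fin.cons a x : Fin (n + 1) → ℕ) 0 = a := by
  simp [entry]

@[simp] theorem entry_cons_succ (a : ℕ) (x : Fin n → ℕ) (m : ℕ) :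
    entry (Fin.cons a x : Fin (n + 1) → ℕ) (m + 1) = entry x m := by
  by_cases h : m < n
  · rw [entry_of_lt _ h, entry_of_lt _ (by omega)]
    exact Fin.cons_succ (α := fun _ => ℕ) a x ⟨m, h⟩
  · simp [entry, h]

theorem entry_append {a b : ℕ} (u : Fin a → ℕ) (v : Fin b → ℕ) (m : ℕ) :
    entry (Fin.append u v) m = if m < a then entry u m else entry v (m - a) := by
  split_ifs with h
  · rw [entry_of_lt _ h, entry_of_lt _ (by omega)]
    exact Fin.append_left u v ⟨m, h⟩
  · by_cases hb : m - a < b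
    · rw [entry_of_lt _ hb, entry_of_lt _ (by omega)]
      convert Fin.append_right u v ⟨m - a, hb⟩ using 2
      ext; simp; omega
    · simp [entry, hb, show ¬ m < a + b by omega]

def OccOmega (p : Fin n → ℕ) (i j : ℕ) : Prop :=
  i + 1 < j ∧ j < n ∧ entry p (i + 1) < entry p i ∧ entry p (i + 1) = entry p j + 1

theorem containsOmega_iff {p : Fin n → ℕ} : ContainsOmega p ↔ ∃ i j, OccOmega p i j := by
  constructor
  · rintro ⟨i, j, hi, hij, h1, h2⟩
    refine ⟨i, j, hij, j.2, ?_, ?_⟩ <;> simpa [entry_of_lt _ hi] using by assumption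
  · rintro ⟨i, j, hij, hj, h1, h2⟩
    refine ⟨⟨i, by omega⟩, ⟨j, hj⟩, by simp; omega, hij, ?_, ?_⟩
    · rwa [entry_of_lt _ (by omega), entry_of_lt _ (by omega)] at h1
    · rwa [entry_of_lt _ (by omega), entry_of_lt _ hj] at h2

theorem contains_iff_exists_three {p : Fin n → ℕ} {y : Fin 3 → ℕ} :
    Contains p y ↔ ∃ a b c, a < b ∧ b < c ∧ c < n ∧
      ∀ s t, y s < y t ↔ entry p (![a, b, c] s) < entry p (![a, b, c] t) := by
  constructor
  · rintro ⟨f, hf, hy⟩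
    refine ⟨f 0, f 1, f 2, hf (by decide), hf (by decide), (f 2).2, fun s t => ?_⟩
    convert hy s t using 2 <;> fin_cases s <;> fin_cases t <;> simp
  · rintro ⟨a, b, c, hab, hbc, hc, hy⟩
    have hf : ∀ s, ![a, b, c] s < n := fun s => by fin_cases s <;> simp <;> omega
    refine ⟨fun s => ⟨_, hf s⟩, Fin.strictMono_iff_lt_succ.2 fun s => ?_, fun s t => ?_⟩
    · fin_cases s <;> simp [Fin.lt_def] <;> omega
    · rw [hy, entry_of_lt _ (hf s), entry_of_lt _ (hf t)]

def Occ231 (p : Fin n → ℕ) (a b c : ℕ) : Prop :=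
  a < b ∧ b < c ∧ c < n ∧ entry p c < entry p a ∧ entry p a < entry p b

def Occ213 (p : Fin n → ℕ) (a b c : ℕ) : Prop :=
  a < b ∧ b < c ∧ c < n ∧ entry p b < entry p a ∧ entry p a < entry p c

theorem contains231_iff {p : Fin n → ℕ} : Contains p ![2, 3, 1] ↔ ∃ a b c, Occ231 p a b c := by
  refine contains_iff_exists_three.trans (exists₃_congr fun a b c => and_congr_right fun _ =>
    and_congr_right fun _ => and_congr_right fun _ => ⟨fun h => ⟨?_, ?_⟩, fun h s t => ?_⟩)
  · simpa using (h 2 0).1 (by decide)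
  · simpa using (h 0 1).1 (by decide)
  · fin_cases s <;> fin_cases t <;> simp <;> omega

theorem contains213_iff {p : Fin n → ℕ} : Contains p ![2, 1, 3] ↔ ∃ a b c, Occ213 p a b c := by
  refine contains_iff_exists_three.trans (exists₃_congr fun a b c => and_congr_right fun _ =>
    and_congr_right fun _ => and_congr_right fun _ => ⟨fun h => ⟨?_, ?_⟩, fun h s t => ?_⟩)
  · simpa using (h 1 0).1 (by decide)
  · simpa using (h 0 2).1 (by decide)
  · fin_cases s <;> fin_cases t <;> simp <;> omega

section Perm

variable {p : Fin n → ℕ}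

theorem IsPerm.entry_mem (hp : IsPerm p) {m : ℕ} (hm : m < n) : 1 ≤ entry p m ∧ entry p m ≤ n := by
  have : p ⟨m, hm⟩ ∈ Set.Icc 1 n := hp.2 ▸ Set.mem_range_self _
  rwa [entry_of_lt p hm]

theorem IsPerm.entry_inj (hp : IsPerm p) {a b : ℕ} (ha : a < n) (hb : b < n)
    (h : entry p a = entry p b) : a = b := by
  rw [entry_of_lt p ha, entry_of_lt p hb] at h
  exact congrArg Fin.val (hp.1 h)

theorem IsPerm.exists_entry_eq (hp : IsPerm p) {v : ℕ} (h1 : 1 ≤ v) (h2 : v ≤ n) :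
    ∃ m < n, entry p m = v := by
  obtain ⟨k, hk⟩ : v ∈ Set.range p := hp.2 ▸ ⟨h1, h2⟩
  exact ⟨k, k.2, by simpa using hk⟩

theorem isPerm_of_injective (hinj : Function.Injective p) (hmem : ∀ k, p k ∈ Set.Icc 1 n) :
    IsPerm p := by
  have hsurj := ((Nat.bijective_iff_injective_and_card (Set.codRestrict p _ hmem)).2
    ⟨(Set.injective_codRestrict _).2 hinj, by simp⟩).2
  refine ⟨hinj, (Set.range_subset_iff.2 hmem).antisymm fun v hv => ?_⟩
  obtain ⟨k, hk⟩ := hsurj ⟨v, hv⟩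
  exact ⟨k, congrArg Subtype.val hk⟩

theorem isPerm_of_range_eq (h : Set.range p = Set.Icc 1 n) : IsPerm p := by
  have hmem : ∀ k, p k ∈ Set.Icc 1 n := fun k => h ▸ Set.mem_range_self k
  have hsurj : Function.Surjective (Set.codRestrict p _ hmem) := by
    rintro ⟨v, hv⟩
    obtain ⟨k, rfl⟩ := h ▸ hv
    exact ⟨k, rfl⟩
  exact ⟨(Set.injective_codRestrict _).1
    ((Nat.bijective_iff_surjective_and_card _).2 ⟨hsurj, by simp⟩).1, h⟩

end Perm

theorem range_append {a b : ℕ} (u : Fin a → ℕ) (v : Fin b → ℕ) :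
    Set.range (Fin.append u v) = Set.range u ∪ Set.range v := by
  ext x
  constructor
  · rintro ⟨k, rfl⟩
    induction k using Fin.addCases <;> simp
  · rintro (⟨k, rfl⟩ | ⟨k, rfl⟩)
    exacts [⟨_, Fin.append_left u v k⟩, ⟨_, Fin.append_right u v k⟩]

theorem append_injective2 {a b : ℕ} :
    Function.Injective2 (Fin.append : (Fin a → ℕ) → (Fin b → ℕ) → Fin (a + b) → ℕ) :=
  fun u v u' v' h => ⟨funext fun k => by simpa using congrFun h (Fin.castAdd b k),
    funext fun k => by simpa using congrFun h (Fin.natAdd a k)⟩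

theorem range_shift (c : ℕ) (q : Fin n → ℕ) : Set.range (shift c q) = (· + c) '' Set.range q :=
  Set.range_comp (· + c) q

def IsFactor {N L : ℕ} (p : Fin N → ℕ) (q : Fin L → ℕ) (s c : ℕ) : Prop :=
  s + L ≤ N ∧ ∀ m < L, entry p (s + m) = entry q m + c

theorem isFactor_cons (a : ℕ) (x : Fin n → ℕ) : IsFactor (Fin.cons a x : Fin (n + 1) → ℕ) x 1 0 :=
  ⟨by omega, fun m _ => by rw [add_comm 1 m, entry_cons_succ, add_zero]⟩

theorem isFactor_append_left {a b : ℕ} (u : Fin a → ℕ) (v : Fin b → ℕ) :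
    IsFactor (Fin.append u v) u 0 0 :=
  ⟨by omega, fun m hm => by rw [entry_append, if_pos (by omega), zero_add, add_zero]⟩

theorem isFactor_append_right {a b : ℕ} (u : Fin a → ℕ) (v : Fin b → ℕ) :
    IsFactor (Fin.append u v) v a 0 :=
  ⟨le_rfl, fun m _ => by rw [entry_append, if_neg (by omega), add_tsub_cancel_left, add_zero]⟩

theorem isFactor_shift (c : ℕ) (q : Fin n → ℕ) : IsFactor (shift c q) q 0 c :=
  ⟨by omega, fun m hm => by rw [zero_add, entry_shift c q hm]⟩

namespace IsFactor

variable {N L : ℕ} {p : Fin N → ℕ} {q : Fin L → ℕ} {s c : ℕ}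

theorem occOmega_iff (h : IsFactor p q s c) {i j : ℕ} (hj : j < L) :
    OccOmega p (s + i) (s + j) ↔ OccOmega q i j := by
  by_cases hij : i + 1 < j
  swap
  · exact iff_of_false (fun h' => hij (by have := h'.1; omega)) (fun h' => hij h'.1)
  have e1 := h.2 i (by omega)
  have e2 : entry p (s + i + 1) = entry q (i + 1) + c := h.2 (i + 1) (by omega)
  have e3 := h.2 j hj
  have := h.1
  unfold OccOmega
  constructor <;> rintro ⟨-, -, h1, h2⟩ <;> exact ⟨by omega, by omega, by omega, by omega⟩

theorem containsOmega (h : IsFactor p q s c) (hq : ContainsOmega q) : ContainsOmega p := by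
  obtain ⟨i, j, hij⟩ := containsOmega_iff.1 hq
  exact containsOmega_iff.2 ⟨s + i, s + j, (h.occOmega_iff hij.2.1).2 hij⟩

theorem occ231_iff (h : IsFactor p q s c) {a b d : ℕ} (hd : d < L) :
    Occ231 p (s + a) (s + b) (s + d) ↔ Occ231 q a b d := by
  by_cases habd : a < b ∧ b < d
  swap
  · exact iff_of_false (fun h' => habd ⟨by have := h'.1; omega, by have := h'.2.1; omega⟩)
      (fun h' => habd ⟨h'.1, h'.2.1⟩)
  have e1 := h.2 a (by omega)
  have e2 := h.2 b (by omega)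
  have e3 := h.2 d hd
  have := h.1
  unfold Occ231
  constructor <;> rintro ⟨-, -, -, h1, h2⟩ <;>
    exact ⟨by omega, by omega, by omega, by omega, by omega⟩

theorem occ213_iff (h : IsFactor p q s c) {a b d : ℕ} (hd : d < L) :
    Occ213 p (s + a) (s + b) (s + d) ↔ Occ213 q a b d := by
  by_cases habd : a < b ∧ b < d
  swap
  · exact iff_of_false (fun h' => habd ⟨by have := h'.1; omega, by have := h'.2.1; omega⟩)
      (fun h' => habd ⟨h'.1, h'.2.1⟩)
  have e1 := h.2 a (by omega)
  have e2 := h.2 b (by omega)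
  have e3 := h.2 d hd
  have := h.1
  unfold Occ213
  constructor <;> rintro ⟨-, -, -, h1, h2⟩ <;>
    exact ⟨by omega, by omega, by omega, by omega, by omega⟩

theorem contains (h : IsFactor p q s c) {k : ℕ} {y : Fin k → ℕ} (hq : Contains q y) :
    Contains p y := by
  obtain ⟨f, hf, hy⟩ := hq
  have hlt : ∀ t, s + f t < N := fun t => by have := h.1; omega
  refine ⟨fun t => ⟨s + f t, hlt t⟩, fun a b hab => Fin.mk_lt_mk.2 (Nat.add_lt_add_left (hf hab) s),
    fun a b => ?_⟩
  rw [← entry_of_lt p (hlt a), ← entry_of_lt p (hlt b), h.2 _ (f a).2, h.2 _ (f b).2,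
    entry_val, entry_val, hy, add_lt_add_iff_right]

end IsFactor

theorem containsOmega_shift_iff (c : ℕ) (q : Fin n → ℕ) :
    ContainsOmega (shift c q) ↔ ContainsOmega q := by
  refine ⟨fun h => ?_, (isFactor_shift c q).containsOmega⟩
  obtain ⟨i, j, hocc⟩ := containsOmega_iff.1 h
  exact containsOmega_iff.2
    ⟨i, j, ((isFactor_shift c q).occOmega_iff hocc.2.1).1 (by simpa using hocc)⟩

theorem contains_shift_iff (c : ℕ) (q : Fin n → ℕ) {k : ℕ} {y : Fin k → ℕ} :
    Contains (shift c q) y ↔ Contains q y := by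
  simp only [Contains, shift, add_lt_add_iff_right]

theorem containsOmega_cons_iff (a : ℕ) (x : Fin n → ℕ) :
    ContainsOmega (Fin.cons a x : Fin (n + 1) → ℕ) ↔
      ContainsOmega x ∨ ∃ j, 0 < j ∧ j < n ∧ entry x 0 < a ∧ entry x 0 = entry x j + 1 := by
  refine ⟨fun h => ?_, fun h => h.elim (isFactor_cons a x).containsOmega
    fun ⟨j, hj0, hj, h1, h2⟩ => containsOmega_iff.2 ⟨0, j + 1, by omega, by omega,
      by simpa using h1, by simpa using h2⟩⟩
  obtain ⟨i, j, hij, hj, h1, h2⟩ := containsOmega_iff.1 h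
  obtain ⟨j, rfl⟩ : ∃ j', j = j' + 1 := ⟨j - 1, by omega⟩
  rcases i with _ | i
  · simp only [entry_cons_succ, entry_cons_zero] at h1 h2
    exact Or.inr ⟨j, by omega, by omega, h1, h2⟩
  · simp only [entry_cons_succ] at h1 h2
    exact Or.inl (containsOmega_iff.2 ⟨i, j, by omega, by omega, h1, h2⟩)

theorem contains231_cons_iff (a : ℕ) (x : Fin n → ℕ) :
    Contains (Fin.cons a x : Fin (n + 1) → ℕ) ![2, 3, 1] ↔
      Contains x ![2, 3, 1] ∨ ∃ b d, b < d ∧ d < n ∧ entry x d < a ∧ a < entry x b := by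
  refine ⟨fun h => ?_, fun h => h.elim (isFactor_cons a x).contains
    fun ⟨b, d, hbd, hd, h1, h2⟩ => contains231_iff.2 ⟨0, b + 1, d + 1, by omega, by omega, by omega,
      by simpa using h1, by simpa using h2⟩⟩
  obtain ⟨i, b, d, hib, hbd, hd, h1, h2⟩ := contains231_iff.1 h
  obtain ⟨b, rfl⟩ : ∃ b', b = b' + 1 := ⟨b - 1, by omega⟩
  obtain ⟨d, rfl⟩ : ∃ d', d = d' + 1 := ⟨d - 1, by omega⟩
  rcases i with _ | i
  · simp only [entry_cons_succ, entry_cons_zero] at h1 h2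
    exact Or.inr ⟨b, d, by omega, by omega, h1, h2⟩
  · simp only [entry_cons_succ] at h1 h2
    exact Or.inl (contains231_iff.2 ⟨i, b, d, by omega, by omega, by omega, h1, h2⟩)

theorem contains213_cons_iff (a : ℕ) (x : Fin n → ℕ) :
    Contains (Fin.cons a x : Fin (n + 1) → ℕ) ![2, 1, 3] ↔
      Contains x ![2, 1, 3] ∨ ∃ b d, b < d ∧ d < n ∧ entry x b < a ∧ a < entry x d := by
  refine ⟨fun h => ?_, fun h => h.elim (isFactor_cons a x).contains
    fun ⟨b, d, hbd, hd, h1, h2⟩ => contains213_iff.2 ⟨0, b + 1, d + 1, by omega, by omega, by omega,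
      by simpa using h1, by simpa using h2⟩⟩
  obtain ⟨i, b, d, hib, hbd, hd, h1, h2⟩ := contains213_iff.1 h
  obtain ⟨b, rfl⟩ : ∃ b', b = b' + 1 := ⟨b - 1, by omega⟩
  obtain ⟨d, rfl⟩ : ∃ d', d = d' + 1 := ⟨d - 1, by omega⟩
  rcases i with _ | i
  · simp only [entry_cons_succ, entry_cons_zero] at h1 h2
    exact Or.inr ⟨b, d, by omega, by omega, h1, h2⟩
  · simp only [entry_cons_succ] at h1 h2
    exact Or.inl (contains213_iff.2 ⟨i, b, d, by omega, by omega, by omega, h1, h2⟩)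

section Append

variable {a b : ℕ} {u : Fin a → ℕ} {v : Fin b → ℕ}

theorem containsOmega_append_iff
    (hcross : ∀ i j, i < a → a ≤ j → ¬ OccOmega (Fin.append u v) i j) :
    ContainsOmega (Fin.append u v) ↔ ContainsOmega u ∨ ContainsOmega v := by
  refine ⟨fun h => ?_, fun h => h.elim (isFactor_append_left u v).containsOmega
    (isFactor_append_right u v).containsOmega⟩
  obtain ⟨i, j, hocc⟩ := containsOmega_iff.1 h
  rcases lt_or_ge j a with hja | hja
  · exact Or.inl (containsOmega_iff.2 ⟨i, j,
      ((isFactor_append_left u v).occOmega_iff hja).1 (by simpa using hocc)⟩)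
  rcases lt_or_ge i a with hia | hia
  · exact absurd hocc (hcross i j hia hja)
  obtain ⟨i, rfl⟩ : ∃ i', i = a + i' := ⟨i - a, by omega⟩
  obtain ⟨j, rfl⟩ : ∃ j', j = a + j' := ⟨j - a, by omega⟩
  exact Or.inr (containsOmega_iff.2 ⟨i, j,
    ((isFactor_append_right u v).occOmega_iff (by have := hocc.2.1; omega)).1 hocc⟩)

theorem containsOmega_append_iff_of_lt (huv : ∀ k < a, ∀ l < b, entry u k < entry v l) :
    ContainsOmega (Fin.append u v) ↔ ContainsOmega u ∨ ContainsOmega v :=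
  containsOmega_append_iff fun i j hia hja ⟨hij, hj, h1, h2⟩ => by
    simp only [entry_append, if_pos hia, if_neg (not_lt.2 hja)] at h1 h2
    split_ifs at h1 h2
    · have := huv (i + 1) (by omega) (j - a) (by omega); omega
    · have := huv i hia (i + 1 - a) (by omega); omega

/-- The gap of at least two between the values of `v` and `u`, and `v` starting with its
minimum, rule out an occurrence of `ω` across the junction. -/
theorem containsOmega_append_iff_of_gt (huv : ∀ k < a, ∀ l < b, entry v l + 1 < entry u k)
    (hv : ∀ l < b, entry v 0 ≤ entry v l) :
    ContainsOmega (Fin.append u v) ↔ ContainsOmega u ∨ ContainsOmega v :=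
  containsOmega_append_iff fun i j hia hja ⟨hij, hj, h1, h2⟩ => by
    simp only [entry_append, if_pos hia, if_neg (not_lt.2 hja)] at h1 h2
    split_ifs at h1 h2
    · have := huv (i + 1) (by omega) (j - a) (by omega); omega
    · have := hv (j - a) (by omega); rw [show i + 1 - a = 0 by omega] at h2; omega

theorem contains231_append_iff
    (hcross : ∀ i k d, i < a → a ≤ d → ¬ Occ231 (Fin.append u v) i k d) :
    Contains (Fin.append u v) ![2, 3, 1] ↔ Contains u ![2, 3, 1] ∨ Contains v ![2, 3, 1] := by
  refine ⟨fun h => ?_, fun h => h.elim (isFactor_append_left u v).contains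
    (isFactor_append_right u v).contains⟩
  obtain ⟨i, k, d, hocc⟩ := contains231_iff.1 h
  obtain ⟨hik, hkd, hd, -⟩ := id hocc
  rcases lt_or_ge d a with hda | hda
  · exact Or.inl (contains231_iff.2 ⟨i, k, d,
      ((isFactor_append_left u v).occ231_iff hda).1 (by simpa using hocc)⟩)
  rcases lt_or_ge i a with hia | hia
  · exact absurd hocc (hcross i k d hia hda)
  obtain ⟨i, rfl⟩ : ∃ i', i = a + i' := ⟨i - a, by omega⟩
  obtain ⟨k, rfl⟩ : ∃ k', k = a + k' := ⟨k - a, by omega⟩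
  obtain ⟨d, rfl⟩ : ∃ d', d = a + d' := ⟨d - a, by omega⟩
  exact Or.inr (contains231_iff.2 ⟨i, k, d,
    ((isFactor_append_right u v).occ231_iff (by omega)).1 hocc⟩)

theorem contains213_append_iff
    (hcross : ∀ i k d, i < a → a ≤ d → ¬ Occ213 (Fin.append u v) i k d) :
    Contains (Fin.append u v) ![2, 1, 3] ↔ Contains u ![2, 1, 3] ∨ Contains v ![2, 1, 3] := by
  refine ⟨fun h => ?_, fun h => h.elim (isFactor_append_left u v).contains
    (isFactor_append_right u v).contains⟩
  obtain ⟨i, k, d, hocc⟩ := contains213_iff.1 h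
  obtain ⟨hik, hkd, hd, -⟩ := id hocc
  rcases lt_or_ge d a with hda | hda
  · exact Or.inl (contains213_iff.2 ⟨i, k, d,
      ((isFactor_append_left u v).occ213_iff hda).1 (by simpa using hocc)⟩)
  rcases lt_or_ge i a with hia | hia
  · exact absurd hocc (hcross i k d hia hda)
  obtain ⟨i, rfl⟩ : ∃ i', i = a + i' := ⟨i - a, by omega⟩
  obtain ⟨k, rfl⟩ : ∃ k', k = a + k' := ⟨k - a, by omega⟩
  obtain ⟨d, rfl⟩ : ∃ d', d = a + d' := ⟨d - a, by omega⟩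
  exact Or.inr (contains213_iff.2 ⟨i, k, d,
    ((isFactor_append_right u v).occ213_iff (by omega)).1 hocc⟩)

theorem contains231_append_iff_of_lt (huv : ∀ k < a, ∀ l < b, entry u k < entry v l) :
    Contains (Fin.append u v) ![2, 3, 1] ↔ Contains u ![2, 3, 1] ∨ Contains v ![2, 3, 1] :=
  contains231_append_iff fun i k d hia hda ⟨_, _, hd, h1, _⟩ => by
    simp only [entry_append, if_pos hia, if_neg (not_lt.2 hda)] at h1
    have := huv i hia (d - a) (by omega); omega

theorem contains213_append_iff_of_gt (huv : ∀ k < a, ∀ l < b, entry v l < entry u k) :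
    Contains (Fin.append u v) ![2, 1, 3] ↔ Contains u ![2, 1, 3] ∨ Contains v ![2, 1, 3] :=
  contains213_append_iff fun i k d hia hda ⟨_, _, hd, _, h2⟩ => by
    simp only [entry_append, if_pos hia, if_neg (not_lt.2 hda)] at h2
    have := huv i hia (d - a) (by omega); omega

end Append

end Words

def IsAvoider {n : ℕ} (y : Fin 3 → ℕ) (p : Fin n → ℕ) : Prop :=
  IsPerm p ∧ ¬ ContainsOmega p ∧ Avoids p y

section Glue

variable {n i j : ℕ}

def consOne (q : Fin n → ℕ) : Fin (n + 1) → ℕ := Fin.cons 1 (shift 1 q)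

theorem entry_consOne_zero (q : Fin n → ℕ) : entry (consOne q) 0 = 1 := entry_cons_zero _ _

theorem entry_consOne_of_pos (q : Fin n → ℕ) {m : ℕ} (h0 : 0 < m) (hm : m < n + 1) :
    entry (consOne q) m = entry q (m - 1) + 1 := by
  obtain ⟨m, rfl⟩ : ∃ m', m = m' + 1 := ⟨m - 1, by omega⟩
  rw [consOne, entry_cons_succ, entry_shift _ _ (by omega), Nat.add_sub_cancel]

theorem shift_injective (c : ℕ) : Function.Injective (shift c : (Fin n → ℕ) → Fin n → ℕ) :=
  fun _ _ h => funext fun k => Nat.add_right_cancel (congrFun h k)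

theorem consOne_injective : Function.Injective (consOne : (Fin n → ℕ) → Fin (n + 1) → ℕ) :=
  fun _ _ h => shift_injective 1 (Fin.cons_injective2 h).2

theorem isPerm_consOne {q : Fin n → ℕ} (hq : IsPerm q) : IsPerm (consOne q) := by
  refine isPerm_of_range_eq ?_
  rw [consOne, Fin.range_cons, range_shift, hq.2, Set.image_add_const_Icc]
  ext v
  simp only [Set.mem_insert_iff, Set.mem_Icc]
  omega

theorem containsOmega_consOne_iff (q : Fin n → ℕ) :
    ContainsOmega (consOne q) ↔ ContainsOmega q := by
  rw [consOne, containsOmega_cons_iff, containsOmega_shift_iff, or_iff_left]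
  rintro ⟨j, -, hj, h1, -⟩
  rw [entry_shift _ _ (by omega)] at h1
  omega

theorem contains_consOne_iff {y : Fin 3 → ℕ} (hy : y = ![2, 1, 3] ∨ y = ![2, 3, 1])
    (q : Fin n → ℕ) : Contains (consOne q) y ↔ Contains q y := by
  rcases hy with rfl | rfl
  · rw [consOne, contains213_cons_iff, contains_shift_iff, or_iff_left]
    rintro ⟨b, d, hbd, hd, h1, -⟩
    rw [entry_shift _ _ (by omega)] at h1
    omega
  · rw [consOne, contains231_cons_iff, contains_shift_iff, or_iff_left]
    rintro ⟨b, d, hbd, hd, h1, -⟩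
    rw [entry_shift _ _ (by omega)] at h1
    omega

theorem entry_consOne_le {q : Fin n → ℕ} (hq : IsPerm q) {k : ℕ} (hk : k < n + 1) :
    entry (consOne q) k ≤ n + 1 :=
  ((isPerm_consOne hq).entry_mem hk).2

theorem le_entry_shift (c : ℕ) (q : Fin n → ℕ) {l : ℕ} (hl : l < n) : c ≤ entry (shift c q) l := by
  rw [entry_shift _ _ hl]
  omega

def glue231 (q1 : Fin i → ℕ) (q2 : Fin j → ℕ) : Fin (i + 1 + j + 1) → ℕ :=
  Fin.cons (i + 2) (Fin.append (consOne q1) (shift (i + 2) q2))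

def glue213 (q1 : Fin i → ℕ) (q2 : Fin j → ℕ) : Fin (j + (i + 1) + 1) → ℕ :=
  Fin.cons (i + 2) (Fin.append (shift (i + 2) q2) (consOne q1))

variable {q1 : Fin i → ℕ} {q2 : Fin j → ℕ}

theorem isPerm_glue231 (hq1 : IsPerm q1) (hq2 : IsPerm q2) : IsPerm (glue231 q1 q2) := by
  refine isPerm_of_range_eq ?_
  rw [glue231, Fin.range_cons, range_append, (isPerm_consOne hq1).2, range_shift, hq2.2,
    Set.image_add_const_Icc]
  ext v
  simp only [Set.mem_insert_iff, Set.mem_union, Set.mem_Icc]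
  omega

theorem isPerm_glue213 (hq1 : IsPerm q1) (hq2 : IsPerm q2) : IsPerm (glue213 q1 q2) := by
  refine isPerm_of_range_eq ?_
  rw [glue213, Fin.range_cons, range_append, (isPerm_consOne hq1).2, range_shift, hq2.2,
    Set.image_add_const_Icc]
  ext v
  simp only [Set.mem_insert_iff, Set.mem_union, Set.mem_Icc]
  omega

theorem containsOmega_glue231_iff (hq1 : IsPerm q1) (hq2 : IsPerm q2) :
    ContainsOmega (glue231 q1 q2) ↔ ContainsOmega q1 ∨ ContainsOmega q2 := by
  rw [glue231, containsOmega_cons_iff, or_iff_left, containsOmega_append_iff_of_lt,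
    containsOmega_consOne_iff, containsOmega_shift_iff]
  · intro k hk l hl
    have := entry_consOne_le hq1 hk
    have := le_entry_shift (i + 2) q2 hl
    omega
  · rintro ⟨l, -, hl, -, h⟩
    have := (isPerm_glue231 hq1 hq2).entry_mem (m := l + 1) (by omega)
    rw [glue231, entry_cons_succ] at this
    rw [entry_append _ _ 0, if_pos (by omega), entry_consOne_zero] at h
    omega

theorem contains231_glue231_iff (hq1 : IsPerm q1) :
    Contains (glue231 q1 q2) ![2, 3, 1] ↔ Contains q1 ![2, 3, 1] ∨ Contains q2 ![2, 3, 1] := by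
  rw [glue231, contains231_cons_iff, or_iff_left, contains231_append_iff_of_lt,
    contains_consOne_iff (Or.inr rfl), contains_shift_iff]
  · intro k hk l hl
    have := entry_consOne_le hq1 hk
    have := le_entry_shift (i + 2) q2 hl
    omega
  · rintro ⟨b, d, hbd, hd, hd1, hb1⟩
    simp only [entry_append] at hd1 hb1
    split_ifs at hd1 hb1 <;>
      first
      | (have := entry_consOne_le hq1 (k := b) (by omega); omega)
      | (have := le_entry_shift (i + 2) q2 (l := d - (i + 1)) (by omega); omega)

theorem containsOmega_glue213_iff (hq1 : IsPerm q1) (hq2 : IsPerm q2) :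
    ContainsOmega (glue213 q1 q2) ↔ ContainsOmega q1 ∨ ContainsOmega q2 := by
  rw [glue213, containsOmega_cons_iff, or_iff_left, containsOmega_append_iff_of_gt,
    containsOmega_shift_iff, containsOmega_consOne_iff, or_comm]
  · intro k hk l hl
    have := entry_consOne_le hq1 hl
    have := hq2.entry_mem hk
    rw [entry_shift _ _ hk]
    omega
  · intro l hl
    have := (isPerm_consOne hq1).entry_mem hl
    rw [entry_consOne_zero]
    omega
  · rintro ⟨l, -, hl, h1, h2⟩
    have := (isPerm_glue213 hq1 hq2).entry_mem (m := l + 1) (by omega)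
    rw [glue213, entry_cons_succ] at this
    rw [entry_append _ _ 0] at h1 h2
    split_ifs at h1 h2 with hj
    · have := le_entry_shift (i + 2) q2 hj; omega
    · rw [Nat.zero_sub, entry_consOne_zero] at h2; omega

theorem contains213_glue213_iff (hq1 : IsPerm q1) :
    Contains (glue213 q1 q2) ![2, 1, 3] ↔ Contains q1 ![2, 1, 3] ∨ Contains q2 ![2, 1, 3] := by
  rw [glue213, contains213_cons_iff, or_iff_left, contains213_append_iff_of_gt,
    contains_shift_iff, contains_consOne_iff (Or.inl rfl), or_comm]
  · intro k hk l hl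
    have := entry_consOne_le hq1 hl
    have := le_entry_shift (i + 2) q2 hk
    omega
  · rintro ⟨b, d, hbd, hd, hb1, hd1⟩
    simp only [entry_append] at hd1 hb1
    split_ifs at hd1 hb1 <;>
      first
      | (have := le_entry_shift (i + 2) q2 (l := b) (by omega); omega)
      | (have := entry_consOne_le hq1 (k := d - j) (by omega); omega)

theorem glue231_injective2 :
    Function.Injective2 (glue231 : (Fin i → ℕ) → (Fin j → ℕ) → Fin (i + 1 + j + 1) → ℕ) :=
  fun _ _ _ _ h =>
    let ⟨h1, h2⟩ := append_injective2 (Fin.cons_injective2 h).2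
    ⟨consOne_injective h1, shift_injective _ h2⟩

theorem glue213_injective2 :
    Function.Injective2 (glue213 : (Fin i → ℕ) → (Fin j → ℕ) → Fin (j + (i + 1) + 1) → ℕ) :=
  fun _ _ _ _ h =>
    let ⟨h2, h1⟩ := append_injective2 (Fin.cons_injective2 h).2
    ⟨consOne_injective h1, shift_injective _ h2⟩

theorem isAvoider_consOne_iff {y : Fin 3 → ℕ} (hy : y = ![2, 1, 3] ∨ y = ![2, 3, 1])
    {q : Fin n → ℕ} (hq : IsPerm q) : IsAvoider y (consOne q) ↔ IsAvoider y q := by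
  simp only [IsAvoider, Avoids, isPerm_consOne hq, hq, containsOmega_consOne_iff,
    contains_consOne_iff hy]

theorem isAvoider_glue231_iff (hq1 : IsPerm q1) (hq2 : IsPerm q2) :
    IsAvoider ![2, 3, 1] (glue231 q1 q2) ↔ IsAvoider ![2, 3, 1] q1 ∧ IsAvoider ![2, 3, 1] q2 := by
  simp only [IsAvoider, Avoids, isPerm_glue231 hq1 hq2, hq1, hq2,
    containsOmega_glue231_iff hq1 hq2, contains231_glue231_iff hq1]
  tauto

theorem isAvoider_glue213_iff (hq1 : IsPerm q1) (hq2 : IsPerm q2) :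
    IsAvoider ![2, 1, 3] (glue213 q1 q2) ↔ IsAvoider ![2, 1, 3] q1 ∧ IsAvoider ![2, 1, 3] q2 := by
  simp only [IsAvoider, Avoids, isPerm_glue213 hq1 hq2, hq1, hq2,
    containsOmega_glue213_iff hq1 hq2, contains213_glue213_iff hq1]
  tauto

end Glue

section Structure

variable {N w : ℕ} {p : Fin N → ℕ}

theorem IsPerm.card_filter_entry_le (hp : IsPerm p) (hw : w ≤ N) :
    #((range N).filter fun m => entry p m ≤ w) = w := by
  refine (card_bij (t := Icc 1 w) (fun m _ => entry p m) (fun m hm => ?_) (fun a ha b hb h => ?_)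
    fun v hv => ?_).trans (by simp)
  · rw [mem_filter, mem_range] at hm
    exact mem_Icc.2 ⟨(hp.entry_mem hm.1).1, hm.2⟩
  · rw [mem_filter, mem_range] at ha hb
    exact hp.entry_inj ha.1 hb.1 h
  · rw [mem_Icc] at hv
    obtain ⟨m, hm, rfl⟩ := hp.exists_entry_eq hv.1 (by omega)
    exact ⟨m, mem_filter.2 ⟨mem_range.2 hm, hv.2⟩, rfl⟩

theorem entry_le_iff_of_avoids231 (hp : IsAvoider ![2, 3, 1] p) (h0 : entry p 0 = w) {m : ℕ}
    (hm : m < N) : entry p m ≤ w ↔ m < w := by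
  have hdown : ∀ s t, s ≤ t → t < N → entry p t ≤ w → entry p s ≤ w := by
    intro s t hst ht hle
    by_contra hs
    have hs0 : s ≠ 0 := by rintro rfl; omega
    have hst' : s ≠ t := by rintro rfl; exact hs hle
    have ht0 : entry p t ≠ w := fun h => by
      have := hp.1.entry_inj ht (by omega : 0 < N) (h.trans h0.symm)
      omega
    exact hp.2.2 (contains231_iff.2 ⟨0, s, t, by omega, by omega, ht, by omega, by omega⟩)
  have hw : w ≤ N := h0 ▸ (hp.1.entry_mem (by omega)).2
  have := congrArg (m ∈ ·) (filter_range_eq_range_card hdown)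
  simpa [hp.1.card_filter_entry_le hw, hm] using this

theorem IsPerm.card_filter_le_entry (hp : IsPerm p) (hw1 : 1 ≤ w) (hw : w ≤ N) :
    #((range N).filter fun m => w ≤ entry p m) = N + 1 - w := by
  have := card_filter_add_card_filter_not (s := range N) fun m => entry p m ≤ w - 1
  rw [hp.card_filter_entry_le (by omega), card_range] at this
  rw [filter_congr fun m _ => show w ≤ entry p m ↔ ¬ entry p m ≤ w - 1 by omega]
  omega

theorem le_entry_iff_of_avoids213 (hp : IsAvoider ![2, 1, 3] p) (h0 : entry p 0 = w) {m : ℕ}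
    (hm : m < N) : w ≤ entry p m ↔ m < N + 1 - w := by
  have hdown : ∀ s t, s ≤ t → t < N → w ≤ entry p t → w ≤ entry p s := by
    intro s t hst ht hle
    by_contra hs
    have hs0 : s ≠ 0 := by rintro rfl; omega
    have hst' : s ≠ t := by rintro rfl; exact hs hle
    have ht0 : entry p t ≠ w := fun h => by
      have := hp.1.entry_inj ht (by omega : 0 < N) (h.trans h0.symm)
      omega
    exact hp.2.2 (contains213_iff.2 ⟨0, s, t, by omega, by omega, ht, by omega, by omega⟩)
  have hw := hp.1.entry_mem (m := 0) (by omega)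
  have := congrArg (m ∈ ·) (filter_range_eq_range_card hdown)
  simpa [hp.1.card_filter_le_entry (h0 ▸ hw.1) (h0 ▸ hw.2), hm] using this

theorem entry_one_of_avoids231 (hp : IsAvoider ![2, 3, 1] p) (h0 : entry p 0 = w) (hw : 2 ≤ w)
    (hwN : w ≤ N) : entry p 1 = 1 := by
  have hle := (entry_le_iff_of_avoids231 hp h0 (m := 1) (by omega)).2 (by omega)
  have hne : entry p 1 ≠ entry p 0 := fun h => one_ne_zero (hp.1.entry_inj (by omega) (by omega) h)
  have hpos := (hp.1.entry_mem (m := 1) (by omega)).1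
  by_contra hne1
  obtain ⟨t, ht, hvt⟩ := hp.1.exists_entry_eq (v := entry p 1 - 1) (by omega) (by omega)
  have ht0 : t ≠ 0 := by rintro rfl; omega
  have ht1 : t ≠ 1 := by rintro rfl; omega
  exact hp.2.1 (containsOmega_iff.2 ⟨0, t, by omega, ht, by rw [zero_add]; omega,
    by rw [zero_add]; omega⟩)

theorem entry_eq_one_of_avoids213 (hp : IsAvoider ![2, 1, 3] p) (h0 : entry p 0 = w)
    (hw : 2 ≤ w) (hwN : w ≤ N) : entry p (N + 1 - w) = 1 := by
  obtain ⟨i, hi⟩ : ∃ i, N + 1 - w = i + 1 := ⟨N - w, by omega⟩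
  rw [hi]
  have hlt := (le_entry_iff_of_avoids213 hp h0 (m := i + 1) (by omega)).not.2 (by omega)
  have hprev := (le_entry_iff_of_avoids213 hp h0 (m := i) (by omega)).2 (by omega)
  have hpos := (hp.1.entry_mem (m := i + 1) (by omega)).1
  by_contra hne1
  obtain ⟨t, ht, hvt⟩ := hp.1.exists_entry_eq (v := entry p (i + 1) - 1) (by omega) (by omega)
  have hti : i + 1 < t := by
    by_contra hti
    rcases Nat.lt_or_ge t (i + 1) with h | h
    · have := (le_entry_iff_of_avoids213 hp h0 ht).2 (by omega); omega
    · obtain rfl : t = i + 1 := by omega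
      omega
  exact hp.2.1 (containsOmega_iff.2 ⟨i, t, hti, ht, by omega, by omega⟩)

end Structure

section Factor

variable {N : ℕ} {p : Fin N → ℕ} {s c L : ℕ}

def factor (p : Fin N → ℕ) (s c L : ℕ) : Fin L → ℕ := fun k => entry p (s + k) - c

theorem entry_factor {k : ℕ} (hk : k < L) : entry (factor p s c L) k = entry p (s + k) - c := by
  rw [entry_of_lt _ hk]
  rfl

theorem isPerm_factor (hp : IsPerm p) (hsL : s + L ≤ N)
    (h : ∀ k < L, c < entry p (s + k) ∧ entry p (s + k) ≤ c + L) : IsPerm (factor p s c L) := by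
  refine isPerm_of_injective (fun a b hab => Fin.ext ?_) fun k => ?_
  · have ha := h a a.2
    have hb := h b b.2
    have : entry p (s + a) - c = entry p (s + b) - c := hab
    have := hp.entry_inj (by omega) (by omega) (show entry p (s + a) = entry p (s + b) by omega)
    omega
  · have := h k k.2
    show entry p (s + k) - c ∈ Set.Icc 1 L
    rw [Set.mem_Icc]
    omega

end Factor

theorem exists_consOne_eq {n : ℕ} {p : Fin (n + 1) → ℕ} (hp : IsPerm p) (h0 : entry p 0 = 1) :
    ∃ q, IsPerm q ∧ consOne q = p := by
  have hb : ∀ k < n, 1 < entry p (1 + k) ∧ entry p (1 + k) ≤ 1 + n := fun k hk => by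
    have := hp.entry_mem (m := 1 + k) (by omega)
    have := hp.entry_inj (a := 1 + k) (b := 0) (by omega) (by omega)
    omega
  refine ⟨_, isPerm_factor hp (by omega) hb, ext_of_entry fun m hm => ?_⟩
  rcases m with _ | m
  · rw [entry_consOne_zero, h0]
  · rw [entry_consOne_of_pos _ (by omega) hm, Nat.add_sub_cancel, entry_factor (by omega)]
    have := hb m (by omega)
    rw [add_comm 1 m] at this ⊢
    omega

theorem exists_glue231_eq {i j : ℕ} {p : Fin (i + 1 + j + 1) → ℕ} (hp : IsAvoider ![2, 3, 1] p)
    (h0 : entry p 0 = i + 2) : ∃ q1 q2, IsPerm q1 ∧ IsPerm q2 ∧ glue231 q1 q2 = p := by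
  have hle := fun m (hm : m < i + 1 + j + 1) => entry_le_iff_of_avoids231 hp h0 hm
  have h1 := entry_one_of_avoids231 hp h0 (by omega) (by omega)
  have hne : ∀ m < i + 1 + j + 1, ∀ m' < i + 1 + j + 1, m ≠ m' → entry p m ≠ entry p m' :=
    fun m hm m' hm' h e => h (hp.1.entry_inj hm hm' e)
  have hb1 : ∀ k < i, 1 < entry p (2 + k) ∧ entry p (2 + k) ≤ 1 + i := fun k hk => by
    have := (hle (2 + k) (by omega)).2 (by omega)
    have := hne (2 + k) (by omega) 0 (by omega) (by omega)
    have := hne (2 + k) (by omega) 1 (by omega) (by omega)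
    have := hp.1.entry_mem (m := 2 + k) (by omega)
    omega
  have hb2 : ∀ k < j, i + 2 < entry p (i + 2 + k) ∧ entry p (i + 2 + k) ≤ i + 2 + j :=
    fun k hk => by
      have := (hle (i + 2 + k) (by omega)).not.2 (by omega)
      have := hp.1.entry_mem (m := i + 2 + k) (by omega)
      omega
  refine ⟨_, _, isPerm_factor hp.1 (by omega) hb1, isPerm_factor hp.1 (by omega) hb2,
    ext_of_entry fun m hm => ?_⟩
  rcases m with _ | m
  · rw [glue231, entry_cons_zero, h0]
  rw [glue231, entry_cons_succ, entry_append]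
  split_ifs with hmi
  · rcases m with _ | m
    · rw [entry_consOne_zero, h1]
    · rw [entry_consOne_of_pos _ (by omega) hmi, Nat.add_sub_cancel, entry_factor (by omega)]
      have := hb1 m (by omega)
      rw [show 2 + m = m + 1 + 1 by omega] at this ⊢
      omega
  · rw [entry_shift _ _ (by omega), entry_factor (by omega)]
    have := hb2 (m - (i + 1)) (by omega)
    rw [show i + 2 + (m - (i + 1)) = m + 1 by omega] at this ⊢
    omega

theorem exists_glue213_eq {i j : ℕ} {p : Fin (j + (i + 1) + 1) → ℕ} (hp : IsAvoider ![2, 1, 3] p)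
    (h0 : entry p 0 = i + 2) : ∃ q1 q2, IsPerm q1 ∧ IsPerm q2 ∧ glue213 q1 q2 = p := by
  have hle := fun m (hm : m < j + (i + 1) + 1) => le_entry_iff_of_avoids213 hp h0 hm
  have h1 : entry p (j + 1) = 1 := by
    have := entry_eq_one_of_avoids213 hp h0 (by omega) (by omega)
    rwa [show j + (i + 1) + 1 + 1 - (i + 2) = j + 1 by omega] at this
  have hne : ∀ m < j + (i + 1) + 1, ∀ m' < j + (i + 1) + 1, m ≠ m' → entry p m ≠ entry p m' :=
    fun m hm m' hm' h e => h (hp.1.entry_inj hm hm' e)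
  have hb1 : ∀ k < i, 1 < entry p (j + 2 + k) ∧ entry p (j + 2 + k) ≤ 1 + i := fun k hk => by
    have := (hle (j + 2 + k) (by omega)).not.2 (by omega)
    have := hne (j + 2 + k) (by omega) (j + 1) (by omega) (by omega)
    have := hp.1.entry_mem (m := j + 2 + k) (by omega)
    omega
  have hb2 : ∀ k < j, i + 2 < entry p (1 + k) ∧ entry p (1 + k) ≤ i + 2 + j := fun k hk => by
    have := (hle (1 + k) (by omega)).2 (by omega)
    have := hne (1 + k) (by omega) 0 (by omega) (by omega)
    have := hp.1.entry_mem (m := 1 + k) (by omega)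
    omega
  refine ⟨_, _, isPerm_factor hp.1 (by omega) hb1, isPerm_factor hp.1 (by omega) hb2,
    ext_of_entry fun m hm => ?_⟩
  rcases m with _ | m
  · rw [glue213, entry_cons_zero, h0]
  rw [glue213, entry_cons_succ, entry_append]
  split_ifs with hmj
  · rw [entry_shift _ _ hmj, entry_factor hmj]
    have := hb2 m hmj
    rw [add_comm 1 m] at this ⊢
    omega
  rcases Nat.lt_or_ge j m with hjm | hjm
  · rw [entry_consOne_of_pos _ (by omega) (by omega), entry_factor (by omega)]
    have := hb1 (m - j - 1) (by omega)
    rw [show j + 2 + (m - j - 1) = m + 1 by omega] at this ⊢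
    omega
  · rw [show m = j by omega, Nat.sub_self, entry_consOne_zero, h1]

noncomputable def numAvoiders (y : Fin 3 → ℕ) (n : ℕ) : ℕ :=
  Nat.card {p : Fin n → ℕ // IsAvoider y p}

theorem numAvoiders_zero (y : Fin 3 → ℕ) : numAvoiders y 0 = 1 := by
  refine Nat.card_eq_one_iff_unique.2 ⟨⟨fun a b => Subtype.ext (funext fun i => i.elim0)⟩,
    ⟨⟨Fin.elim0, ⟨Function.injective_of_subsingleton _, by simp⟩, ?_, ?_⟩⟩⟩
  · rintro ⟨i, -⟩
    exact i.elim0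
  · rintro ⟨f, -⟩
    exact (f 0).elim0

instance (y : Fin 3 → ℕ) (n : ℕ) : Finite {p : Fin n → ℕ // IsAvoider y p} :=
  Finite.of_injective
    (fun p i => (⟨p.1 i, Nat.lt_succ_of_le (p.2.1.2 ▸ Set.mem_range_self i).2⟩ : Fin (n + 1)))
    fun _ _ h => Subtype.ext (funext fun i => congrArg Fin.val (congrFun h i))

theorem numAvoiders_succ (y : Fin 3 → ℕ) (n : ℕ) :
    numAvoiders y (n + 1) =
      ∑ w ∈ range (n + 1), Nat.card {p : Fin (n + 1) → ℕ // IsAvoider y p ∧ entry p 0 = w + 1} := by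
  rw [numAvoiders, Nat.card_eq_sum_card_fiber (fun p => entry p.1 0 - 1) (K := n + 1)
    fun p => by have := p.2.1.entry_mem (m := 0) (by omega); omega]
  refine sum_congr rfl fun w _ => Nat.card_congr ((Equiv.subtypeSubtypeEquivSubtypeInter _
    (fun p => entry p 0 - 1 = w)).trans (Equiv.subtypeEquivRight fun p => and_congr_right
      fun hp => ?_))
  have := hp.1.entry_mem (m := 0) (by omega)
  omega

theorem card_avoider_entry_zero_eq_one {y : Fin 3 → ℕ} (hy : y = ![2, 1, 3] ∨ y = ![2, 3, 1])
    (n : ℕ) :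
    Nat.card {p : Fin (n + 1) → ℕ // IsAvoider y p ∧ entry p 0 = 1} = numAvoiders y n := by
  refine card_subtype_eq_of_injective consOne consOne_injective
    (fun q hq => ⟨(isAvoider_consOne_iff hy hq.1).2 hq, entry_consOne_zero q⟩)
    fun p ⟨hp, h0⟩ => ?_
  obtain ⟨q, hq, rfl⟩ := exists_consOne_eq hp.1 h0
  exact ⟨q, (isAvoider_consOne_iff hy hq).1 hp, rfl⟩

theorem card_avoider231_entry_zero {N i j : ℕ} (hN : N = i + j + 2) :
    Nat.card {p : Fin N → ℕ // IsAvoider ![2, 3, 1] p ∧ entry p 0 = i + 2} =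
      numAvoiders ![2, 3, 1] i * numAvoiders ![2, 3, 1] j := by
  obtain rfl : N = i + 1 + j + 1 := by omega
  refine card_subtype_eq_mul_of_injective2 glue231 glue231_injective2
    (fun q1 q2 h1 h2 => ⟨(isAvoider_glue231_iff h1.1 h2.1).2 ⟨h1, h2⟩, entry_cons_zero _ _⟩)
    fun p ⟨hp, h0⟩ => ?_
  obtain ⟨q1, q2, hq1, hq2, rfl⟩ := exists_glue231_eq hp h0
  have := (isAvoider_glue231_iff hq1 hq2).1 hp
  exact ⟨q1, q2, this.1, this.2, rfl⟩

theorem card_avoider213_entry_zero {N i j : ℕ} (hN : N = i + j + 2) :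
    Nat.card {p : Fin N → ℕ // IsAvoider ![2, 1, 3] p ∧ entry p 0 = i + 2} =
      numAvoiders ![2, 1, 3] i * numAvoiders ![2, 1, 3] j := by
  obtain rfl : N = j + (i + 1) + 1 := by omega
  refine card_subtype_eq_mul_of_injective2 glue213 glue213_injective2
    (fun q1 q2 h1 h2 => ⟨(isAvoider_glue213_iff h1.1 h2.1).2 ⟨h1, h2⟩, entry_cons_zero _ _⟩)
    fun p ⟨hp, h0⟩ => ?_
  obtain ⟨q1, q2, hq1, hq2, rfl⟩ := exists_glue213_eq hp h0
  have := (isAvoider_glue213_iff hq1 hq2).1 hp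
  exact ⟨q1, q2, this.1, this.2, rfl⟩

theorem numAvoiders_one {y : Fin 3 → ℕ} (hy : y = ![2, 1, 3] ∨ y = ![2, 3, 1]) :
    numAvoiders y 1 = 1 := by
  rw [numAvoiders_succ, sum_range_one, zero_add, card_avoider_entry_zero_eq_one hy,
    numAvoiders_zero]

theorem numAvoiders_add_two {y : Fin 3 → ℕ} (hy : y = ![2, 1, 3] ∨ y = ![2, 3, 1]) (n : ℕ) :
    numAvoiders y (n + 2) =
      numAvoiders y (n + 1) + ∑ ij ∈ antidiagonal n, numAvoiders y ij.1 * numAvoiders y ij.2 := by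
  rw [numAvoiders_succ, sum_range_succ', zero_add, card_avoider_entry_zero_eq_one hy, add_comm,
    Nat.sum_antidiagonal_eq_sum_range_succ_mk]
  refine congrArg _ (sum_congr rfl fun i hi => ?_)
  rw [mem_range] at hi
  rcases hy with rfl | rfl
  · exact card_avoider213_entry_zero (by omega)
  · exact card_avoider231_entry_zero (by omega)

/-- For `y ∈ {213, 231}`, the number of permutations of `{1,…,n}`
avoiding both `ω` and `y` is the `n`-th Motzkin number
`m_n = Σ_k C(n,2k) · c_k`. -/
theorem count_omega_y (n : ℕ) (y : Fin 3 → ℕ)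
    (hy : y = ![2, 1, 3] ∨ y = ![2, 3, 1]) :
    Nat.card {p : Fin n → ℕ // IsPerm p ∧ ¬ ContainsOmega p ∧ Avoids p y} =
      ∑ k ∈ Finset.range (n + 1), Nat.choose n (2 * k) * catalan k :=
  eq_motzkin_of_recurrence (numAvoiders_zero y) (numAvoiders_one hy) (numAvoiders_add_two hy) n
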